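/- arXiv:1107.0893 — 3 statements merged into one kernel-verified Lean document; each statement's English description precedes it below -/
import Mathlib

section
/- Let V be an irreducible H-module on which c acts as multiplication by a scalar, and suppose V is a torsion module, i.e., for every i ∈ ℤ∖{0} the operator e_i e_{−i} has an eigenvector in V. Then V is locally finite: for every i ∈ ℤ∖{0} and every v ∈ V, the subspace span_ℂ{(e_i e_{−i})^k·v : k ≥ 0} is finite-dimensional. -/
/-!
STATEMENT 5: an irreducible torsion H-module (with c acting by a scalar) is locally finite:
for every i ≠ 0 and every v, the span of the (e_i e_{−i})^k·v, k ≥ 0, is finite-dimensional.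
-/

/-- The infinite-dimensional Heisenberg Lie algebra `H` over ℂ, with basis
`{c} ∪ {e_i : i ∈ ℤ∖{0}}`, `c` central and `[e_i, e_j] = δ_{i,-j}·c`
(normalized so that `[e_i, e_{-i}] = c` for `i > 0`). -/
structure HeisenbergH (H : Type) [LieRing H] [LieAlgebra ℂ H] : Type where
  c : H
  e : ℤ → H
  basis : Module.Basis (Option {i : ℤ // i ≠ 0}) ℂ H
  basis_none : basis none = c
  basis_some : ∀ i, basis (some i) = e i.1
  lie_c : ∀ y : H, ⁅c, y⁆ = 0
  lie_e_e_same : ∀ i : ℤ, 0 < i → ⁅e i, e (-i)⁆ = c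
  lie_e_e_other : ∀ i j : ℤ, i ≠ 0 → j ≠ 0 → i ≠ -j → ⁅e i, e j⁆ = 0

/-!
Let `T = e_i e_{-i}`. Since `[e_{±i}, e_j]` is central, `[T, e_j]` is a multiple of `e_j`, so each
`e_j` shifts `T`-eigenvalues by a constant; as `c` acts by a scalar, the span of the
`T`-eigenvectors is a Lie submodule. Torsion makes it nonzero and irreducibility makes it all of
`V`. Hence `v` is a finite sum of eigenvectors, whose span is `T`-stable, finite-dimensional and
contains the whole `T`-orbit of `v`.
-/

namespace Module.End

variable {K V : Type*} [Field K] [AddCommGroup V] [Module K V]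

theorem finiteDimensional_span_iterate_of_mem_iSup_eigenspace (f : End K V) {v : V}
    (hv : v ∈ ⨆ μ, f.eigenspace μ) :
    FiniteDimensional K (Submodule.span K (Set.range fun k : ℕ => (⇑f)^[k] v)) := by
  rw [Submodule.iSup_eq_span] at hv
  obtain ⟨s, hs, hvs⟩ := Submodule.mem_span_finite_of_mem_span hv
  have hmaps : Set.MapsTo f (Submodule.span K (s : Set V)) (Submodule.span K (s : Set V)) := by
    refine Submodule.span_le (p := (Submodule.span K (s : Set V)).comap f) |>.mpr fun w hw => ?_
    obtain ⟨μ, hμ⟩ := Set.mem_iUnion.mp (hs hw)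
    rw [SetLike.mem_coe, Submodule.mem_comap, mem_eigenspace_iff.mp hμ]
    exact Submodule.smul_mem _ _ (Submodule.subset_span hw)
  refine Submodule.finiteDimensional_of_le (S₂ := Submodule.span K (s : Set V))
    (Submodule.span_le.mpr ?_)
  rintro _ ⟨k, rfl⟩
  exact hmaps.iterate k hvs

end Module.End

theorem lie_mem_span_of_span_eq_top {R L M : Type*} [CommRing R] [LieRing L] [LieAlgebra R L]
    [AddCommGroup M] [Module R M] [LieRingModule L M] [LieModule R L M]
    {s : Set L} (hs : Submodule.span R s = ⊤) {t : Set M}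
    (h : ∀ x ∈ s, ∀ m ∈ t, ⁅x, m⁆ ∈ Submodule.span R t) (x : L) {m : M}
    (hm : m ∈ Submodule.span R t) : ⁅x, m⁆ ∈ Submodule.span R t := by
  have hx : x ∈ Submodule.span R s := hs ▸ Submodule.mem_top
  induction hx using Submodule.span_induction with
  | mem y hy =>
    have hle : Submodule.span R t ≤ (Submodule.span R t).comap (LieModule.toEnd R L M y) :=
      Submodule.span_le.mpr (h y hy)
    exact hle hm
  | zero => simp
  | add y z _ _ hy hz => rw [add_lie]; exact add_mem hy hz
  | smul r y _ hy => rw [smul_lie]; exact Submodule.smul_mem _ r hy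

namespace HeisenbergH

variable {H : Type} [LieRing H] [LieAlgebra ℂ H] (E : HeisenbergH H)

theorem lie_e_e_neg {i : ℤ} (hi : i ≠ 0) : ⁅E.e i, E.e (-i)⁆ = (i.sign : ℂ) • E.c := by
  rcases hi.lt_or_gt with hneg | hpos
  · have h := E.lie_e_e_same (-i) (by omega)
    rw [neg_neg, ← lie_skew, neg_eq_iff_eq_neg] at h
    simp [Int.sign_eq_neg_one_of_neg hneg, h]
  · simp [Int.sign_eq_one_of_pos hpos, E.lie_e_e_same i hpos]

variable (V : Type) [AddCommGroup V] [Module ℂ V] [LieRingModule H V] [LieModule ℂ H V]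

def eProd (i : ℤ) : Module.End ℂ V :=
  LieModule.toEnd ℂ H V (E.e i) * LieModule.toEnd ℂ H V (E.e (-i))

variable {V}

theorem eProd_apply (i : ℤ) (u : V) : E.eProd V i u = ⁅E.e i, ⁅E.e (-i), u⁆⁆ := rfl

variable {a : ℂ} (hc : ∀ v : V, ⁅E.c, v⁆ = a • v)
include hc

theorem exists_eProd_lie_e {i j : ℤ} (hi : i ≠ 0) (hj : j ≠ 0) :
    ∃ lam : ℂ, ∀ u : V, E.eProd V i ⁅E.e j, u⁆ = ⁅E.e j, E.eProd V i u⁆ + lam • ⁅E.e j, u⁆ := by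
  simp only [eProd_apply]
  have hbr : ∀ {k : ℤ}, k ≠ 0 → ∀ u : V, ⁅⁅E.e k, E.e (-k)⁆, u⁆ = (k.sign * a) • u := by
    intro k hk u
    rw [E.lie_e_e_neg hk, smul_lie, hc, smul_smul]
  rcases eq_or_ne j i with rfl | hji
  · refine ⟨(-j).sign * a, fun u => ?_⟩
    have h := hbr (neg_ne_zero.mpr hj) u
    rw [neg_neg] at h
    rw [leibniz_lie (E.e (-j)), h, lie_add, lie_smul, add_comm]
  by_cases hjni : j = -i
  · subst hjni
    refine ⟨i.sign * a, fun u => ?_⟩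
    rw [leibniz_lie (E.e i), hbr hi, add_comm]
  · have h1 := E.lie_e_e_other i j hi hj (by omega)
    have h2 := E.lie_e_e_other (-i) j (by omega) hj (by omega)
    refine ⟨0, fun u => ?_⟩
    rw [leibniz_lie (E.e (-i)), h2, zero_lie, zero_add, leibniz_lie (E.e i), h1, zero_lie,
      zero_add, zero_smul, add_zero]

theorem iSup_eigenspace_eProd_eq_top (hirr : ∀ N : LieSubmodule ℂ H V, N = ⊥ ∨ N = ⊤)
    {i : ℤ} (hi : i ≠ 0) {w : V} (hw : w ≠ 0) {μ : ℂ} (hμ : w ∈ (E.eProd V i).eigenspace μ) :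
    ⨆ μ, (E.eProd V i).eigenspace μ = ⊤ := by
  set t := ⋃ μ, ((E.eProd V i).eigenspace μ : Set V)
  have hlie : ∀ (x : H) {m : V}, m ∈ Submodule.span ℂ t → ⁅x, m⁆ ∈ Submodule.span ℂ t := by
    refine lie_mem_span_of_span_eq_top E.basis.span_eq ?_
    rintro _ ⟨_ | j, rfl⟩ m hm
    · rw [E.basis_none, hc]
      exact Submodule.smul_mem _ _ (Submodule.subset_span hm)
    · obtain ⟨ν, hν⟩ := Set.mem_iUnion.mp hm
      obtain ⟨lam, hlam⟩ := E.exists_eProd_lie_e hc hi j.2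
      refine Submodule.subset_span (Set.mem_iUnion.mpr ⟨ν + lam, ?_⟩)
      rw [E.basis_some, SetLike.mem_coe, Module.End.mem_eigenspace_iff, hlam,
        Module.End.mem_eigenspace_iff.mp hν, lie_smul, add_smul]
  let N : LieSubmodule ℂ H V := { Submodule.span ℂ t with lie_mem := hlie _ }
  have hN : N ≠ ⊥ := by
    have hwN : w ∈ N := Submodule.subset_span (Set.mem_iUnion.mpr ⟨μ, hμ⟩)
    exact fun hbot => hw ((LieSubmodule.mem_bot w).mp (hbot ▸ hwN))
  rw [Submodule.iSup_eq_span]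
  exact congrArg LieSubmodule.toSubmodule ((hirr N).resolve_left hN)

end HeisenbergH

theorem stmt_5_general (H : Type) [LieRing H] [LieAlgebra ℂ H] (E : HeisenbergH H)
    (V : Type) [AddCommGroup V] [Module ℂ V] [LieRingModule H V] [LieModule ℂ H V]
    (hirr : ∀ N : LieSubmodule ℂ H V, N = ⊥ ∨ N = ⊤)
    (a : ℂ) (hc : ∀ v : V, ⁅E.c, v⁆ = a • v)
    (htor : ∀ i : ℤ, i ≠ 0 → ∃ v : V, v ≠ 0 ∧ ∃ μ : ℂ, ⁅E.e i, ⁅E.e (-i), v⁆⁆ = μ • v) :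
    ∀ i : ℤ, i ≠ 0 → ∀ v : V,
      FiniteDimensional ℂ
        (Submodule.span ℂ (Set.range fun k : ℕ => (fun u : V => ⁅E.e i, ⁅E.e (-i), u⁆⁆)^[k] v)) := by
  intro i hi v
  obtain ⟨w, hw, μ, hμ⟩ := htor i hi
  have hv : v ∈ ⨆ μ, (E.eProd V i).eigenspace μ := by
    rw [E.iSup_eigenspace_eProd_eq_top hc hirr hi hw (Module.End.mem_eigenspace_iff.mpr hμ)]
    exact Submodule.mem_top
  exact (E.eProd V i).finiteDimensional_span_iterate_of_mem_iSup_eigenspace hv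

theorem stmt_5 (H : Type) [LieRing H] [LieAlgebra ℂ H] (E : HeisenbergH H)
    (V : Type) [AddCommGroup V] [Module ℂ V] [LieRingModule H V] [LieModule ℂ H V]
    (hnt : Nontrivial V)
    (hirr : ∀ N : LieSubmodule ℂ H V, N = ⊥ ∨ N = ⊤)
    (a : ℂ) (hc : ∀ v : V, ⁅E.c, v⁆ = a • v)
    (htor : ∀ i : ℤ, i ≠ 0 → ∃ v : V, v ≠ 0 ∧ ∃ μ : ℂ, ⁅E.e i, ⁅E.e (-i), v⁆⁆ = μ • v) :
    ∀ i : ℤ, i ≠ 0 → ∀ v : V,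
      FiniteDimensional ℂ
        (Submodule.span ℂ (Set.range fun k : ℕ => (fun u : V => ⁅E.e i, ⁅E.e (-i), u⁆⁆)^[k] v)) :=
  stmt_5_general H E V hirr a hc htor
end

section
/- Let V be an irreducible H-module on which c acts as multiplication by a scalar, and suppose V is diagonal, i.e., the operators e_i e_{−i}, i ∈ ℤ∖{0}, have a common eigenvector in V. Then V is locally finite: for every i ∈ ℤ∖{0} and every v ∈ V, the subspace span_ℂ{(e_i e_{−i})^k·v : k ≥ 0} is finite-dimensional. -/
open Submodule LieModule

namespace Module.End

section CommRing

variable {R V : Type*} [CommRing R] [AddCommGroup V] [Module R V]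

def eigenvectorSpan (f : Module.End R V) : Submodule R V :=
  span R {w | ∃ μ : R, f w = μ • w}

theorem apply_eq_smul_of_lie_eq_smul {f g : Module.End R V} {l μ : R} (hfg : ⁅f, g⁆ = l • g)
    {w : V} (hw : f w = μ • w) : f (g w) = (μ + l) • g w := by
  have h := congr($hfg w)
  rw [Ring.lie_def, LinearMap.sub_apply, mul_apply, mul_apply, hw, map_smul,
    LinearMap.smul_apply, sub_eq_iff_eq_add] at h
  rw [h, add_smul, add_comm]

theorem eigenvectorSpan_le_comap {f g : Module.End R V} {l : R} (hfg : ⁅f, g⁆ = l • g) :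
    f.eigenvectorSpan ≤ f.eigenvectorSpan.comap g :=
  span_le.2 fun _ ⟨μ, hw⟩ => subset_span ⟨μ + l, apply_eq_smul_of_lie_eq_smul hfg hw⟩

end CommRing

theorem finiteDimensional_span_iterate_of_mem_eigenvectorSpan {K V : Type*} [Field K]
    [AddCommGroup V] [Module K V] (f : Module.End K V) {v : V} (hv : v ∈ f.eigenvectorSpan) :
    FiniteDimensional K (span K (Set.range fun k : ℕ => f^[k] v)) := by
  obtain ⟨t, ht, hvt⟩ := mem_span_finite_of_mem_span hv
  have hinv : span K (t : Set V) ≤ (span K (t : Set V)).comap f :=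
    span_le.2 fun w hw => by
      obtain ⟨μ, hμ⟩ := ht hw
      simpa [hμ] using smul_mem _ μ (subset_span hw)
  have horbit : ∀ k : ℕ, f^[k] v ∈ span K (t : Set V) := by
    intro k
    induction k with
    | zero => exact hvt
    | succ k ih => rw [Function.iterate_succ_apply']; exact hinv ih
  exact finiteDimensional_of_le (span_le.2 (Set.range_subset_iff.2 horbit))

end Module.End

namespace LieModule

variable {R L V : Type*} [CommRing R] [LieRing L] [LieAlgebra R L]
  [AddCommGroup V] [Module R V] [LieRingModule L V] [LieModule R L V]

theorem lie_mem_eigenvectorSpan {f : Module.End R V} {S : Set L} (hS : span R S = ⊤)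
    (hf : ∀ x ∈ S, ∃ l : R, ⁅f, toEnd R L V x⁆ = l • toEnd R L V x) (x : L) {w : V}
    (hw : w ∈ f.eigenvectorSpan) : ⁅x, w⁆ ∈ f.eigenvectorSpan := by
  have hx : x ∈ span R S := hS ▸ mem_top
  induction hx using span_induction generalizing w with
  | mem y hy =>
    obtain ⟨l, hl⟩ := hf y hy
    exact Module.End.eigenvectorSpan_le_comap hl hw
  | zero => simp
  | add y z _ _ hy hz => rw [add_lie]; exact add_mem (hy hw) (hz hw)
  | smul r y _ hy => rw [smul_lie]; exact smul_mem _ r (hy hw)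

theorem eigenvectorSpan_eq_top {f : Module.End R V} {S : Set L} (hS : span R S = ⊤)
    (hf : ∀ x ∈ S, ∃ l : R, ⁅f, toEnd R L V x⁆ = l • toEnd R L V x)
    (hirr : ∀ N : LieSubmodule R L V, N = ⊥ ∨ N = ⊤) {v : V} (hv : v ≠ 0) {μ : R}
    (hμ : f v = μ • v) : f.eigenvectorSpan = ⊤ := by
  let N : LieSubmodule R L V :=
    { f.eigenvectorSpan with lie_mem := fun hw => lie_mem_eigenvectorSpan hS hf _ hw }
  have hvN : v ∈ N := subset_span ⟨μ, hμ⟩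
  obtain hN | hN := hirr N
  · exact absurd ((LieSubmodule.mem_bot v).1 (hN ▸ hvN)) hv
  · exact congr(LieSubmodule.toSubmodule $hN)

end LieModule

namespace HeisenbergH

variable {H : Type} [LieRing H] [LieAlgebra ℂ H] (E : HeisenbergH H)

theorem lie_e_e {i j : ℤ} (hi : i ≠ 0) (hj : j ≠ 0) :
    ⁅E.e i, E.e j⁆ = if i + j = 0 then (Int.sign i : ℂ) • E.c else 0 := by
  split_ifs with hij
  · obtain rfl : j = -i := by omega
    rcases hi.lt_or_gt with hneg | hpos
    · have h := E.lie_e_e_same (-i) (by omega)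
      rw [neg_neg] at h
      rw [← lie_skew, h, Int.sign_eq_neg_one_of_neg hneg]
      simp
    · rw [E.lie_e_e_same i hpos, Int.sign_eq_one_of_pos hpos]
      simp
  · exact E.lie_e_e_other i j hi hj (by omega)

variable {V : Type} [AddCommGroup V] [Module ℂ V] [LieRingModule H V] [LieModule ℂ H V]
  {a : ℂ}

theorem toEnd_lie_e_e (hc : ∀ v : V, ⁅E.c, v⁆ = a • v) {i j : ℤ} (hi : i ≠ 0) (hj : j ≠ 0) :
    ⁅toEnd ℂ H V (E.e i), toEnd ℂ H V (E.e j)⁆ =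
      if i + j = 0 then ((Int.sign i : ℂ) * a) • 1 else 0 := by
  ext v
  rw [Ring.lie_def, LinearMap.sub_apply, Module.End.mul_apply, Module.End.mul_apply]
  simp only [toEnd_apply_apply, ← lie_lie, E.lie_e_e hi hj]
  split_ifs <;> simp [hc, mul_smul]

theorem lie_toEnd_e_mul_toEnd_e_neg (hc : ∀ v : V, ⁅E.c, v⁆ = a • v) {i j : ℤ} (hi : i ≠ 0)
    (hj : j ≠ 0) : ∃ l : ℂ, ⁅toEnd ℂ H V (E.e i) * toEnd ℂ H V (E.e (-i)), toEnd ℂ H V (E.e j)⁆ =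
      l • toEnd ℂ H V (E.e j) := by
  set ρ := toEnd ℂ H V
  have hprod : ⁅ρ (E.e i) * ρ (E.e (-i)), ρ (E.e j)⁆ =
      ρ (E.e i) * ⁅ρ (E.e (-i)), ρ (E.e j)⁆ + ⁅ρ (E.e i), ρ (E.e j)⁆ * ρ (E.e (-i)) := by
    simp only [Ring.lie_def]
    noncomm_ring
  rw [hprod, E.toEnd_lie_e_e hc hi hj, E.toEnd_lie_e_e hc (neg_ne_zero.2 hi) hj]
  by_cases hji : j = i
  · subst hji
    exact ⟨(Int.sign (-j) : ℂ) * a, by simp [hi]⟩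
  by_cases hjni : j = -i
  · subst hjni
    exact ⟨(Int.sign i : ℂ) * a, by simp [hi]⟩
  · exact ⟨0, by simp [show ¬(-i + j = 0) by omega, show ¬(i + j = 0) by omega]⟩

theorem lie_toEnd_e_mul_toEnd_e_neg_of_mem_range_basis (hc : ∀ v : V, ⁅E.c, v⁆ = a • v) {i : ℤ}
    (hi : i ≠ 0) : ∀ x ∈ Set.range E.basis, ∃ l : ℂ,
      ⁅toEnd ℂ H V (E.e i) * toEnd ℂ H V (E.e (-i)), toEnd ℂ H V x⁆ = l • toEnd ℂ H V x := by
  rintro _ ⟨_ | ⟨j, hj⟩, rfl⟩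
  · have hcV : toEnd ℂ H V E.c = a • 1 := LinearMap.ext hc
    refine ⟨0, ?_⟩
    rw [E.basis_none, hcV, Ring.lie_def, mul_smul_comm, smul_mul_assoc, mul_one, one_mul,
      sub_self, zero_smul]
  · rw [E.basis_some]
    exact E.lie_toEnd_e_mul_toEnd_e_neg hc hi hj

end HeisenbergH

theorem stmt_7_general (H : Type) [LieRing H] [LieAlgebra ℂ H] (E : HeisenbergH H)
    (V : Type) [AddCommGroup V] [Module ℂ V] [LieRingModule H V] [LieModule ℂ H V]
    (hirr : ∀ N : LieSubmodule ℂ H V, N = ⊥ ∨ N = ⊤)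
    (a : ℂ) (hc : ∀ v : V, ⁅E.c, v⁆ = a • v)
    (hdiag : ∃ v : V, v ≠ 0 ∧ ∀ i : ℤ, i ≠ 0 → ∃ μ : ℂ, ⁅E.e i, ⁅E.e (-i), v⁆⁆ = μ • v) :
    ∀ i : ℤ, i ≠ 0 → ∀ v : V,
      FiniteDimensional ℂ
        (Submodule.span ℂ (Set.range fun k : ℕ => (fun u : V => ⁅E.e i, ⁅E.e (-i), u⁆⁆)^[k] v)) := by
  intro i hi v
  obtain ⟨v₀, hv₀, hv₀_eigen⟩ := hdiag
  obtain ⟨μ, hμ⟩ := hv₀_eigen i hi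
  set Ω := toEnd ℂ H V (E.e i) * toEnd ℂ H V (E.e (-i))
  have htop : Ω.eigenvectorSpan = ⊤ :=
    eigenvectorSpan_eq_top E.basis.span_eq
      (E.lie_toEnd_e_mul_toEnd_e_neg_of_mem_range_basis hc hi) hirr hv₀ hμ
  exact Ω.finiteDimensional_span_iterate_of_mem_eigenvectorSpan (htop ▸ mem_top)

theorem stmt_7 (H : Type) [LieRing H] [LieAlgebra ℂ H] (E : HeisenbergH H)
    (V : Type) [AddCommGroup V] [Module ℂ V] [LieRingModule H V] [LieModule ℂ H V]
    (hnt : Nontrivial V)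
    (hirr : ∀ N : LieSubmodule ℂ H V, N = ⊥ ∨ N = ⊤)
    (a : ℂ) (hc : ∀ v : V, ⁅E.c, v⁆ = a • v)
    (hdiag : ∃ v : V, v ≠ 0 ∧ ∀ i : ℤ, i ≠ 0 → ∃ μ : ℂ, ⁅E.e i, ⁅E.e (-i), v⁆⁆ = μ • v) :
    ∀ i : ℤ, i ≠ 0 → ∀ v : V,
      FiniteDimensional ℂ
        (Submodule.span ℂ (Set.range fun k : ℕ => (fun u : V => ⁅E.e i, ⁅E.e (-i), u⁆⁆)^[k] v)) :=
  stmt_7_general H E V hirr a hc hdiag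
end

section
/- Let φ̃ : {(k,i) : k ∈ ℕ, 1 ≤ i ≤ d_k} → {+,−} be any function and a ∈ ℂ. Then the φ̃-Verma module M_{φ̃}(a) is an irreducible L-module if and only if a ≠ 0. -/
/-!
STATEMENT 15: for any function φ̃ : {(k,i) : k ∈ ℕ, 1 ≤ i ≤ d_k} → {+,−} and a ∈ ℂ, the
φ̃-Verma module M_{φ̃}(a) is an irreducible L-module iff a ≠ 0.
We model the sign set `{+,−}` by `Bool`, with `true` standing for `+`; `φ̃ : ℕ → ℕ → Bool`
is only relevant on pairs `(k,i)` with `1 ≤ k` and `1 ≤ i ≤ d k`.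
-/

open UniversalEnvelopingAlgebra

/-- The Heisenberg Lie algebra `L` with basis `{c} ∪ {x_{k,i} : k ∈ ℤ∖{0}, 1 ≤ i ≤ d |k|}`,
`c` central, and `[x_{k,i}, x_{l,j}] = δ_{k,-l} δ_{i,j} k c`. -/
structure HeisenbergL (d : ℕ → ℕ) (L : Type) [LieRing L] [LieAlgebra ℂ L] : Type where
  c : L
  x : ℤ → ℕ → L
  basis : Module.Basis (Option {p : ℤ × ℕ // p.1 ≠ 0 ∧ 1 ≤ p.2 ∧ p.2 ≤ d p.1.natAbs}) ℂ L
  basis_none : basis none = c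
  basis_some : ∀ p, basis (some p) = x p.1.1 p.1.2
  lie_c : ∀ y : L, ⁅c, y⁆ = 0
  lie_x_x : ∀ k l i j, k ≠ 0 → l ≠ 0 → 1 ≤ i → i ≤ d k.natAbs → 1 ≤ j → j ≤ d l.natAbs →
    ⁅x k i, x l j⁆ = if k = -l ∧ i = j then (k : ℂ) • c else 0

/-- Indices of the basis vectors `x_{k,i}` spanning `L_{φ̃}^+`: those `x_{k,i}` with `k > 0`
and `φ̃(k,i) = +`, together with the `x_{-k,i}` with `k > 0` and `φ̃(k,i) = -`. -/
def posIdxT (d : ℕ → ℕ) (φ : ℕ → ℕ → Bool) : Set (ℤ × ℕ) :=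
  {p | p.1 ≠ 0 ∧ 1 ≤ p.2 ∧ p.2 ≤ d p.1.natAbs ∧
    ((0 < p.1 ∧ φ p.1.natAbs p.2 = true) ∨ (p.1 < 0 ∧ φ p.1.natAbs p.2 = false))}

variable {d : ℕ → ℕ} {L : Type} [LieRing L] [LieAlgebra ℂ L]

/-- The left ideal of `U(L)` generated by `c - a·1` and `L_{φ̃}^+`. -/
def vermaIdealT (E : HeisenbergL d L) (φ : ℕ → ℕ → Bool) (a : ℂ) :
    Submodule (UniversalEnvelopingAlgebra ℂ L) (UniversalEnvelopingAlgebra ℂ L) :=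
  Submodule.span (UniversalEnvelopingAlgebra ℂ L)
    ({ι ℂ E.c - algebraMap ℂ (UniversalEnvelopingAlgebra ℂ L) a} ∪
      ((fun p : ℤ × ℕ => ι ℂ (E.x p.1 p.2)) '' posIdxT d φ))

/-- The φ̃-Verma module `M_{φ̃}(a)`, realized as `U(L)/U(L)·⟨c - a, L_{φ̃}^+⟩`. -/
def VermaModT (E : HeisenbergL d L) (φ : ℕ → ℕ → Bool) (a : ℂ) :=
  UniversalEnvelopingAlgebra ℂ L ⧸ vermaIdealT E φ a

instance (E : HeisenbergL d L) (φ : ℕ → ℕ → Bool) (a : ℂ) : AddCommGroup (VermaModT E φ a) :=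
  inferInstanceAs (AddCommGroup (UniversalEnvelopingAlgebra ℂ L ⧸ vermaIdealT E φ a))

instance (E : HeisenbergL d L) (φ : ℕ → ℕ → Bool) (a : ℂ) :
    Module (UniversalEnvelopingAlgebra ℂ L) (VermaModT E φ a) :=
  inferInstanceAs (Module (UniversalEnvelopingAlgebra ℂ L)
    (UniversalEnvelopingAlgebra ℂ L ⧸ vermaIdealT E φ a))

/-!
The Verma module is realized on the Fock space `ℂ[y_p : p ∈ L⁺]`: `c` acts as `a`, `x_p` for
`p ∈ L⁺` as `a p₁ ∂/∂y_p`, and `x_{p*}`, `p* = (-p₁, p₂)`, as multiplication by `y_p`. The map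
`u • v ↦ u • 1` is injective, because the Verma module is spanned by the products of the commuting
`x_{p*}` applied to `v`, which go to the monomials in the `y_p`.

If `a ≠ 0`, a nonzero submodule is sent to a nonzero space of polynomials stable under every
`∂/∂y_p`; such a space contains `1`, so the submodule contains `v`. If `a = 0`, then `c` and the
`x_p`, `p ∈ L⁺`, act by zero, and the vectors sent to polynomials without constant term form a
proper nonzero submodule.
-/

open MvPolynomial UniversalEnvelopingAlgebra

attribute [local instance 100] LieRing.ofAssociativeRing

section MvPolynomial

variable {R σ : Type*}

theorem MvPolynomial.commute_pderiv_pderiv [CommRing R] (i j : σ) :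
    Commute (pderiv i : Derivation R (MvPolynomial σ R) _).toLinearMap (pderiv j).toLinearMap := by
  rw [commute_iff_lie_eq, ← Derivation.commutator_coe_linear_map]
  suffices ⁅pderiv i, pderiv j⁆ = (0 : Derivation R (MvPolynomial σ R) _) by rw [this]; rfl
  refine derivation_ext fun k => ?_
  classical
  rw [Derivation.commutator_apply, pderiv_X, pderiv_X]
  simp [Pi.single_apply, apply_ite]

theorem MvPolynomial.pderiv_mul_mulLeft_X [CommSemiring R] [DecidableEq σ] (i j : σ) :
    (pderiv i : Derivation R (MvPolynomial σ R) _).toLinearMap * LinearMap.mulLeft R (X j) =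
      LinearMap.mulLeft R (X j) * (pderiv i).toLinearMap + if j = i then 1 else 0 := by
  refine LinearMap.ext fun f => ?_
  by_cases h : j = i
  · subst h; simp [add_comm]
  · simp [h]

theorem LinearMap.commute_mulLeft_mulLeft [CommSemiring R] {A : Type*} [CommSemiring A]
    [Algebra R A] (a b : A) : Commute (mulLeft R a) (mulLeft R b) := by
  rw [Commute, SemiconjBy, Module.End.mul_eq_comp, Module.End.mul_eq_comp, ← mulLeft_mul,
    ← mulLeft_mul, mul_comm]

theorem MvPolynomial.totalDegree_pderiv_lt [CommSemiring R] {p : MvPolynomial σ R}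
    (hp : 0 < p.totalDegree) (i : σ) : (pderiv i p).totalDegree < p.totalDegree := by
  refine (Finset.sup_lt_iff (show (⊥ : ℕ) < _ from hp)).2 fun k hk => ?_
  have hk' : k + Finsupp.single i 1 ∈ p.support := by
    rw [mem_support_iff, coeff_pderiv] at hk
    exact mem_support_iff.2 (left_ne_zero_of_mul hk)
  have hsum : ((k + Finsupp.single i 1).sum fun _ e => e) = (k.sum fun _ e => e) + 1 := by
    rw [Finsupp.sum_add_index' (fun _ => rfl) (fun _ _ _ => rfl), Finsupp.sum_single_index rfl]
  have := le_totalDegree hk'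
  omega

theorem MvPolynomial.exists_pderiv_ne_zero [CommSemiring R] [IsAddTorsionFree R]
    {p : MvPolynomial σ R} (hp : 0 < p.totalDegree) : ∃ i, pderiv i p ≠ 0 := by
  obtain ⟨m, hm, i, hi⟩ : ∃ m ∈ p.support, ∃ i, m i ≠ 0 := by
    by_contra! h
    exact hp.ne' ((totalDegree_eq_zero_iff _ p).2 h)
  refine ⟨i, ne_of_apply_ne (coeff (m - Finsupp.single i 1)) ?_⟩
  rw [coeff_pderiv, coeff_zero, tsub_add_cancel_of_le (Finsupp.single_le_iff.2 (by omega))]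
  have hmi : (m - Finsupp.single i 1 : σ →₀ ℕ) i + 1 = m i := by
    rw [Finsupp.tsub_apply, Finsupp.single_eq_same]; omega
  rw [← Nat.cast_add_one, hmi, mul_comm, ← nsmul_eq_mul]
  exact smul_ne_zero hi (mem_support_iff.1 hm)

theorem MvPolynomial.one_mem_of_pderiv_mem {K : Type*} [Field K] [CharZero K]
    (W : Submodule K (MvPolynomial σ K)) (hW : ∀ i, ∀ p ∈ W, pderiv i p ∈ W)
    {p : MvPolynomial σ K} (hp : p ∈ W) (hp0 : p ≠ 0) : (1 : MvPolynomial σ K) ∈ W := by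
  induction hn : p.totalDegree using Nat.strong_induction_on generalizing p with
  | _ n ih =>
  rcases Nat.eq_zero_or_pos n with rfl | hpos
  · obtain ⟨c, rfl⟩ : ∃ c, p = C c := ⟨_, totalDegree_eq_zero_iff_eq_C.1 hn⟩
    have hc : c ≠ 0 := fun h => hp0 (by rw [h, map_zero])
    have := W.smul_mem c⁻¹ hp
    rwa [smul_eq_C_mul, ← map_mul, inv_mul_cancel₀ hc, map_one] at this
  · subst hn
    obtain ⟨i, hi⟩ := exists_pderiv_ne_zero hpos
    exact ih _ (totalDegree_pderiv_lt hpos i) (hW i p hp) hi rfl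

theorem MvPolynomial.prod_map_X_eq_monomial [CommSemiring R] [DecidableEq σ] (l : List σ) :
    (l.map (X : σ → MvPolynomial σ R)).prod = monomial (Multiset.toFinsupp (l : Multiset σ)) 1 := by
  induction l with
  | nil => simp
  | cons i l ih =>
    rw [List.map_cons, List.prod_cons, ih, ← Multiset.cons_coe, ← Multiset.singleton_add,
      Multiset.toFinsupp_add, Multiset.toFinsupp_singleton, monomial_single_add, pow_one]

end MvPolynomial

section Enveloping

variable {R 𝔤 : Type*} [CommRing R] [LieRing 𝔤] [LieAlgebra R 𝔤]

theorem Module.Basis.map_lie_of_map_lie_basis {κ A : Type*} [LieRing A] [LieAlgebra R A]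
    (b : Module.Basis κ R 𝔤) (f : 𝔤 →ₗ[R] A) (h : ∀ i j, f ⁅b i, b j⁆ = ⁅f (b i), f (b j)⁆)
    (x y : 𝔤) : f ⁅x, y⁆ = ⁅f x, f y⁆ := by
  have : (LieModule.toEnd R 𝔤 𝔤 : 𝔤 →ₗ[R] 𝔤 →ₗ[R] 𝔤).compr₂ f =
      (LieModule.toEnd R A A : A →ₗ[R] A →ₗ[R] A).compl₁₂ f f :=
    b.ext fun i => b.ext fun j => h i j
  exact LinearMap.congr_fun₂ this x y

theorem UniversalEnvelopingAlgebra.adjoin_range_ι :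
    Algebra.adjoin R (Set.range (ι R : 𝔤 → UniversalEnvelopingAlgebra R 𝔤)) = ⊤ := by
  have hsurj : Function.Surjective (mkAlgHom R 𝔤) := RingCon.mkₐ_surjective _
  rw [← (mkAlgHom R 𝔤).range_eq_top.2 hsurj, ← Algebra.map_top, ← TensorAlgebra.adjoin_range_ι,
    AlgHom.map_adjoin, ← Set.range_comp]
  rfl

theorem UniversalEnvelopingAlgebra.mem_adjoin_range_ι (u : UniversalEnvelopingAlgebra R 𝔤) :
    u ∈ Algebra.adjoin R (Set.range (ι R)) :=
  adjoin_range_ι (R := R) (𝔤 := 𝔤) ▸ Algebra.mem_top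

theorem UniversalEnvelopingAlgebra.ι_mul_ι (x y : 𝔤) :
    ι R x * ι R y = ι R y * ι R x + ι R ⁅x, y⁆ := by
  rw [LieHom.map_lie, Ring.lie_def, add_sub_cancel]

theorem UniversalEnvelopingAlgebra.commute_ι_of_lie_eq_zero {z : 𝔤} (hz : ∀ y : 𝔤, ⁅z, y⁆ = 0)
    (u : UniversalEnvelopingAlgebra R 𝔤) : Commute (ι R z) u := by
  have : Algebra.adjoin R (Set.range (ι R)) ≤ Subalgebra.centralizer R {ι R z} := by
    refine Algebra.adjoin_le ?_
    rintro _ ⟨y, rfl⟩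
    refine Subalgebra.mem_centralizer_iff R |>.2 fun w hw => ?_
    rw [Set.mem_singleton_iff.1 hw]
    exact (commute_iff_lie_eq.2 (by rw [← LieHom.map_lie, hz, map_zero])).eq
  exact Subalgebra.mem_centralizer_iff R |>.1 (this (mem_adjoin_range_ι u)) _ rfl

theorem Module.Basis.smul_mem_of_ι_smul_mem {κ M : Type*} [AddCommMonoid M] [Module R M]
    [Module (UniversalEnvelopingAlgebra R 𝔤) M] [IsScalarTower R (UniversalEnvelopingAlgebra R 𝔤) M]
    (b : Module.Basis κ R 𝔤) {W : Submodule R M}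
    (hW : ∀ i, ∀ m ∈ W, ι R (b i) • m ∈ W) (u : UniversalEnvelopingAlgebra R 𝔤) {m : M}
    (hm : m ∈ W) : u • m ∈ W := by
  have hL : ∀ y : 𝔤, ∀ m ∈ W, ι R y • m ∈ W := by
    intro y
    induction b.mem_span y using Submodule.span_induction with
    | mem x hx => obtain ⟨i, rfl⟩ := hx; exact hW i
    | zero => intro m _; rw [map_zero, zero_smul]; exact W.zero_mem
    | add x y _ _ hx hy => intro m hm; rw [map_add, add_smul]; exact add_mem (hx m hm) (hy m hm)
    | smul r x _ hx => intro m hm; rw [map_smul, smul_assoc]; exact W.smul_mem r (hx m hm)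
  induction mem_adjoin_range_ι u using Algebra.adjoin_induction generalizing m with
  | mem x hx => obtain ⟨y, rfl⟩ := hx; exact hL y m hm
  | algebraMap r => rw [algebraMap_smul]; exact W.smul_mem r hm
  | add x y _ _ hx hy => rw [add_smul]; exact add_mem (hx hm) (hy hm)
  | mul x y _ _ hx hy => rw [mul_smul]; exact hx (hy hm)

end Enveloping

namespace HeisenbergL

def IsIdx (d : ℕ → ℕ) (p : ℤ × ℕ) : Prop := p.1 ≠ 0 ∧ 1 ≤ p.2 ∧ p.2 ≤ d p.1.natAbs

def dualIdx (p : ℤ × ℕ) : ℤ × ℕ := (-p.1, p.2)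

@[simp]
theorem dualIdx_dualIdx (p : ℤ × ℕ) : dualIdx (dualIdx p) = p := by
  simp [dualIdx]

theorem dualIdx_eq_iff {p q : ℤ × ℕ} : dualIdx p = q ↔ q.1 = -p.1 ∧ q.2 = p.2 := by
  rw [dualIdx, Prod.ext_iff, eq_comm, @eq_comm _ p.2]

theorem IsIdx.dualIdx {p : ℤ × ℕ} (hp : IsIdx d p) : IsIdx d (dualIdx p) := by
  simpa [IsIdx, HeisenbergL.dualIdx] using hp

variable {φ : ℕ → ℕ → Bool}

theorem isIdx_of_mem_posIdxT {p : ℤ × ℕ} (hp : p ∈ posIdxT d φ) : IsIdx d p :=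
  ⟨hp.1, hp.2.1, hp.2.2.1⟩

theorem dualIdx_mem_posIdxT_iff {p : ℤ × ℕ} (hp : IsIdx d p) :
    dualIdx p ∈ posIdxT d φ ↔ p ∉ posIdxT d φ := by
  obtain ⟨h1, h2, h3⟩ := hp
  simp only [posIdxT, dualIdx]
  rcases lt_or_gt_of_ne h1 with h | h <;> cases φ p.1.natAbs p.2 <;> simp [h1, h2, h3, h, h.not_gt]

theorem posIdxT_nonempty (hd : 1 ≤ d 1) : (posIdxT d φ).Nonempty := by
  by_cases h : φ 1 1
  · exact ⟨(1, 1), by simp [posIdxT, h, hd]⟩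
  · exact ⟨(-1, 1), by simp [posIdxT, h, hd]⟩

abbrev Fock (d : ℕ → ℕ) (φ : ℕ → ℕ → Bool) : Type := MvPolynomial (posIdxT d φ) ℂ

open Classical in
noncomputable def fockGen (d : ℕ → ℕ) (φ : ℕ → ℕ → Bool) (a : ℂ) (p : ℤ × ℕ) :
    Module.End ℂ (Fock d φ) :=
  if hp : p ∈ posIdxT d φ then (a * p.1) • (pderiv (⟨p, hp⟩ : posIdxT d φ)).toLinearMap
  else if hp' : dualIdx p ∈ posIdxT d φ then LinearMap.mulLeft ℂ (X ⟨dualIdx p, hp'⟩)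
  else 0

theorem fockGen_of_mem (a : ℂ) {p : ℤ × ℕ} (hp : p ∈ posIdxT d φ) :
    fockGen d φ a p = (a * p.1) • (pderiv (⟨p, hp⟩ : posIdxT d φ)).toLinearMap := dif_pos hp

theorem fockGen_of_dualIdx_mem (a : ℂ) {p : ℤ × ℕ} (hp : dualIdx p ∈ posIdxT d φ) :
    fockGen d φ a p = LinearMap.mulLeft ℂ (X (⟨dualIdx p, hp⟩ : posIdxT d φ)) := by
  have hp' : p ∉ posIdxT d φ := fun h => (dualIdx_mem_posIdxT_iff (isIdx_of_mem_posIdxT h)).1 hp h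
  rw [fockGen, dif_neg hp', dif_pos hp]

theorem fockGen_dualIdx (a : ℂ) (q : posIdxT d φ) :
    fockGen d φ a (dualIdx q) = LinearMap.mulLeft ℂ (X q) := by
  have hq : dualIdx (dualIdx q.1) ∈ posIdxT d φ := by rw [dualIdx_dualIdx]; exact q.2
  rw [fockGen_of_dualIdx_mem a hq]
  congr
  simp

theorem lie_fockGen_of_mem (a : ℂ) {p q : ℤ × ℕ} (hp : p ∈ posIdxT d φ) (hq : IsIdx d q) :
    ⁅fockGen d φ a p, fockGen d φ a q⁆ = if p.1 = -q.1 ∧ p.2 = q.2 then (p.1 * a) • 1 else 0 := by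
  classical
  simp only [← dualIdx_eq_iff]
  by_cases hq' : q ∈ posIdxT d φ
  · have hpq : dualIdx q ≠ p := fun h => (dualIdx_mem_posIdxT_iff hq).1 (h ▸ hp) hq'
    rw [fockGen_of_mem a hp, fockGen_of_mem a hq', if_neg hpq, Ring.lie_def, smul_mul_assoc,
      smul_mul_assoc, mul_smul_comm, mul_smul_comm, (commute_pderiv_pderiv _ _).eq, smul_comm,
      sub_self]
  · have hq'' := (dualIdx_mem_posIdxT_iff hq).2 hq'
    rw [fockGen_of_mem a hp, fockGen_of_dualIdx_mem a hq'', Ring.lie_def, smul_mul_assoc,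
      mul_smul_comm, pderiv_mul_mulLeft_X, smul_add, add_sub_cancel_left]
    simp only [Subtype.mk.injEq, mul_comm a]
    split_ifs <;> simp

theorem lie_fockGen (a : ℂ) {p q : ℤ × ℕ} (hp : IsIdx d p) (hq : IsIdx d q) :
    ⁅fockGen d φ a p, fockGen d φ a q⁆ = if p.1 = -q.1 ∧ p.2 = q.2 then (p.1 * a) • 1 else 0 := by
  by_cases hp' : p ∈ posIdxT d φ
  · exact lie_fockGen_of_mem a hp' hq
  by_cases hq' : q ∈ posIdxT d φ
  · rw [← lie_skew, lie_fockGen_of_mem a hq' hp]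
    by_cases h : p.1 = -q.1 ∧ p.2 = q.2
    · rw [if_pos h, if_pos ⟨by omega, h.2.symm⟩, h.1]
      push_cast
      exact (neg_smul _ _).symm.trans (by rw [neg_mul])
    · rw [if_neg h, if_neg fun h' => h ⟨by omega, h'.2.symm⟩, neg_zero]
  · have hpq : ¬(p.1 = -q.1 ∧ p.2 = q.2) := fun h =>
      hp' (dualIdx_eq_iff.2 h ▸ (dualIdx_mem_posIdxT_iff hq).2 hq')
    rw [fockGen_of_dualIdx_mem a ((dualIdx_mem_posIdxT_iff hp).2 hp'),
      fockGen_of_dualIdx_mem a ((dualIdx_mem_posIdxT_iff hq).2 hq'), if_neg hpq,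
      (LinearMap.commute_mulLeft_mulLeft _ _).lie_eq]

theorem constantCoeff_fockGen_zero (p : ℤ × ℕ) (f : Fock d φ) :
    constantCoeff (fockGen d φ 0 p f) = 0 := by
  unfold fockGen
  split_ifs <;> simp

variable (E : HeisenbergL d L) (φ : ℕ → ℕ → Bool) (a : ℂ)

noncomputable def fockRepLin : L →ₗ[ℂ] Module.End ℂ (Fock d φ) :=
  E.basis.constr ℂ fun i => i.elim (a • 1) fun p => fockGen d φ a p.1

theorem fockRepLin_c : fockRepLin E φ a E.c = a • 1 := by
  rw [← E.basis_none, fockRepLin, Module.Basis.constr_basis, Option.elim_none]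

theorem fockRepLin_x {p : ℤ × ℕ} (hp : IsIdx d p) :
    fockRepLin E φ a (E.x p.1 p.2) = fockGen d φ a p := by
  rw [← E.basis_some ⟨p, hp⟩, fockRepLin, Module.Basis.constr_basis, Option.elim_some]

theorem fockRepLin_lie_basis (i j) :
    fockRepLin E φ a ⁅E.basis i, E.basis j⁆ =
      ⁅fockRepLin E φ a (E.basis i), fockRepLin E φ a (E.basis j)⁆ := by
  rcases i with _ | ⟨p, hp⟩
  · rw [E.basis_none, E.lie_c, map_zero, fockRepLin_c, ((Commute.one_left _).smul_left a).lie_eq]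
  rcases j with _ | ⟨q, hq⟩
  · rw [E.basis_none, ← lie_skew, E.lie_c, neg_zero, map_zero, fockRepLin_c, ← lie_skew,
      ((Commute.one_left _).smul_left a).lie_eq, neg_zero]
  rw [E.basis_some, E.basis_some, E.lie_x_x _ _ _ _ hp.1 hq.1 hp.2.1 hp.2.2 hq.2.1 hq.2.2,
    fockRepLin_x E φ a hp, fockRepLin_x E φ a hq, lie_fockGen a hp hq]
  split_ifs
  · rw [map_smul, fockRepLin_c, smul_smul]
  · rw [map_zero]

noncomputable def fockRep : L →ₗ⁅ℂ⁆ Module.End ℂ (Fock d φ) :=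
  { fockRepLin E φ a with
    map_lie' := E.basis.map_lie_of_map_lie_basis _ (fockRepLin_lie_basis E φ a) _ _ }

noncomputable def fockAct : UniversalEnvelopingAlgebra ℂ L →ₐ[ℂ] Module.End ℂ (Fock d φ) :=
  lift ℂ (fockRep E φ a)

theorem fockAct_ι (y : L) : fockAct E φ a (ι ℂ y) = fockRepLin E φ a y :=
  lift_ι_apply ℂ _ y

theorem fockAct_vermaIdealT {u : UniversalEnvelopingAlgebra ℂ L} (hu : u ∈ vermaIdealT E φ a) :
    fockAct E φ a u 1 = 0 := by
  induction hu using Submodule.span_induction with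
  | mem u hu =>
    rcases hu with rfl | ⟨p, hp, rfl⟩
    · rw [map_sub, AlgHom.commutes, fockAct_ι, fockRepLin_c, LinearMap.sub_apply,
        Module.algebraMap_end_apply, LinearMap.smul_apply, Module.End.one_apply, sub_self]
    · rw [fockAct_ι, fockRepLin_x E φ a (isIdx_of_mem_posIdxT hp), fockGen_of_mem a hp]
      simp
  | zero => rw [map_zero, LinearMap.zero_apply]
  | add u v _ _ hu hv => rw [map_add, LinearMap.add_apply, hu, hv, add_zero]
  | smul v u _ hu => rw [smul_eq_mul, map_mul, Module.End.mul_apply, hu, map_zero]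

noncomputable instance : Module ℂ (VermaModT E φ a) :=
  inferInstanceAs (Module ℂ (UniversalEnvelopingAlgebra ℂ L ⧸ vermaIdealT E φ a))

instance : IsScalarTower ℂ (UniversalEnvelopingAlgebra ℂ L) (VermaModT E φ a) :=
  inferInstanceAs (IsScalarTower ℂ (UniversalEnvelopingAlgebra ℂ L)
    (UniversalEnvelopingAlgebra ℂ L ⧸ vermaIdealT E φ a))

instance : SMulCommClass (UniversalEnvelopingAlgebra ℂ L) ℂ (VermaModT E φ a) :=
  inferInstanceAs (SMulCommClass (UniversalEnvelopingAlgebra ℂ L) ℂ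
    (UniversalEnvelopingAlgebra ℂ L ⧸ vermaIdealT E φ a))

noncomputable def toFock : VermaModT E φ a →ₗ[ℂ] Fock d φ :=
  ((vermaIdealT E φ a).restrictScalars ℂ).liftQ (LinearMap.applyₗ 1 ∘ₗ (fockAct E φ a).toLinearMap)
      (fun _ => fockAct_vermaIdealT E φ a) ∘ₗ
    (Submodule.Quotient.restrictScalarsEquiv ℂ (vermaIdealT E φ a)).symm.toLinearMap

theorem toFock_mk (u : UniversalEnvelopingAlgebra ℂ L) :
    toFock E φ a (Submodule.Quotient.mk u) = fockAct E φ a u 1 :=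
  rfl

def vacuum : VermaModT E φ a := Submodule.Quotient.mk 1

theorem mk_eq_smul_vacuum (u : UniversalEnvelopingAlgebra ℂ L) :
    (Submodule.Quotient.mk u : VermaModT E φ a) = u • vacuum E φ a :=
  (congrArg Submodule.Quotient.mk (mul_one u).symm).trans (Submodule.Quotient.mk_smul _ u 1)

theorem toFock_smul (u : UniversalEnvelopingAlgebra ℂ L) (m : VermaModT E φ a) :
    toFock E φ a (u • m) = fockAct E φ a u (toFock E φ a m) := by
  obtain ⟨v, rfl⟩ := Submodule.Quotient.mk_surjective _ m
  exact (congrArg (toFock E φ a) (Submodule.Quotient.mk_smul _ u v).symm).trans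
    (congrArg (· (1 : Fock d φ)) (map_mul (fockAct E φ a) u v))

theorem toFock_ι_smul (y : L) (m : VermaModT E φ a) :
    toFock E φ a (ι ℂ y • m) = fockRepLin E φ a y (toFock E φ a m) := by
  rw [toFock_smul, fockAct_ι]

theorem toFock_vacuum : toFock E φ a (vacuum E φ a) = 1 := by
  rw [vacuum, toFock_mk, map_one (fockAct E φ a), Module.End.one_apply]

theorem eq_top_of_vacuum_mem {N : Submodule (UniversalEnvelopingAlgebra ℂ L) (VermaModT E φ a)}
    (h : vacuum E φ a ∈ N) : N = ⊤ :=
  eq_top_iff.2 fun m _ => by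
    obtain ⟨u, rfl⟩ := Submodule.Quotient.mk_surjective _ m
    rw [mk_eq_smul_vacuum]
    exact N.smul_mem u h

theorem exists_lie_x_x_eq_smul_c {p q : ℤ × ℕ} (hp : IsIdx d p) (hq : IsIdx d q) :
    ∃ s : ℂ, ⁅E.x p.1 p.2, E.x q.1 q.2⁆ = s • E.c := by
  rw [E.lie_x_x _ _ _ _ hp.1 hq.1 hp.2.1 hp.2.2 hq.2.1 hq.2.2]
  split_ifs
  exacts [⟨_, rfl⟩, ⟨0, (zero_smul ℂ _).symm⟩]

theorem ι_c_smul_vacuum : ι ℂ E.c • vacuum E φ a = a • vacuum E φ a := by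
  rw [← mk_eq_smul_vacuum E φ a, ← algebraMap_smul (UniversalEnvelopingAlgebra ℂ L) a,
    ← mk_eq_smul_vacuum E φ a]
  exact (Submodule.Quotient.eq _).2 (Submodule.subset_span (Or.inl rfl))

theorem ι_c_smul (m : VermaModT E φ a) : ι ℂ E.c • m = a • m := by
  obtain ⟨u, rfl⟩ := Submodule.Quotient.mk_surjective _ m
  rw [mk_eq_smul_vacuum, ← mul_smul, (commute_ι_of_lie_eq_zero E.lie_c u).eq, mul_smul,
    ι_c_smul_vacuum, smul_comm]

theorem ι_x_smul_vacuum {p : ℤ × ℕ} (hp : p ∈ posIdxT d φ) :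
    ι ℂ (E.x p.1 p.2) • vacuum E φ a = 0 := by
  rw [← mk_eq_smul_vacuum]
  exact (Submodule.Quotient.mk_eq_zero _).2 (Submodule.subset_span (Or.inr ⟨p, hp, rfl⟩))

def creation (p : posIdxT d φ) : UniversalEnvelopingAlgebra ℂ L :=
  ι ℂ (E.x (dualIdx p.1).1 (dualIdx p.1).2)

theorem commute_creation (p q : posIdxT d φ) : Commute (creation E φ p) (creation E φ q) := by
  have hp := (isIdx_of_mem_posIdxT p.2).dualIdx
  have hq := (isIdx_of_mem_posIdxT q.2).dualIdx
  refine commute_iff_lie_eq.2 ?_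
  rw [creation, creation, ← LieHom.map_lie, E.lie_x_x _ _ _ _ hp.1 hq.1 hp.2.1 hp.2.2 hq.2.1 hq.2.2,
    if_neg, map_zero]
  intro h
  have : dualIdx p.1 = q.1 := by
    simp only [dualIdx] at h ⊢; exact Prod.ext (by omega) h.2
  exact (dualIdx_mem_posIdxT_iff (isIdx_of_mem_posIdxT p.2)).1 (this ▸ q.2) p.2

noncomputable def vermaMonomial (l : List (posIdxT d φ)) : VermaModT E φ a :=
  (l.map (creation E φ)).prod • vacuum E φ a

theorem vermaMonomial_nil : vermaMonomial E φ a [] = vacuum E φ a := by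
  rw [vermaMonomial, List.map_nil, List.prod_nil, one_smul]

theorem vermaMonomial_cons (p : posIdxT d φ) (l : List (posIdxT d φ)) :
    vermaMonomial E φ a (p :: l) = creation E φ p • vermaMonomial E φ a l := by
  rw [vermaMonomial, vermaMonomial, List.map_cons, List.prod_cons, mul_smul]

theorem vermaMonomial_perm {l l' : List (posIdxT d φ)} (h : l.Perm l') :
    vermaMonomial E φ a l = vermaMonomial E φ a l' := by
  rw [vermaMonomial, vermaMonomial, (h.map _).prod_eq' ?_]
  exact List.pairwise_map.2 (List.pairwise_of_forall (commute_creation E φ))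

theorem span_vermaMonomial : Submodule.span ℂ (Set.range (vermaMonomial E φ a)) = ⊤ := by
  set W := Submodule.span ℂ (Set.range (vermaMonomial E φ a))
  have smul_mem_of_forall (u : UniversalEnvelopingAlgebra ℂ L)
      (hu : ∀ l, u • vermaMonomial E φ a l ∈ W) : ∀ m ∈ W, u • m ∈ W := fun m hm =>
    (Submodule.span_le (p := W.comap (DistribSMul.toLinearMap ℂ _ u))).2
      (Set.range_subset_iff.2 hu) hm
  have creation_mem (p : posIdxT d φ) : ∀ m ∈ W, creation E φ p • m ∈ W :=
    smul_mem_of_forall _ fun l => by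
      rw [← vermaMonomial_cons]; exact Submodule.subset_span ⟨_, rfl⟩
  have x_pos_mem {p : ℤ × ℕ} (hp : p ∈ posIdxT d φ) : ∀ m ∈ W, ι ℂ (E.x p.1 p.2) • m ∈ W :=
    smul_mem_of_forall _ fun l => by
      induction l with
      | nil => rw [vermaMonomial_nil, ι_x_smul_vacuum E φ a hp]; exact W.zero_mem
      | cons q l ih =>
        obtain ⟨s, hs⟩ := exists_lie_x_x_eq_smul_c E (isIdx_of_mem_posIdxT hp)
          (isIdx_of_mem_posIdxT q.2).dualIdx
        rw [vermaMonomial_cons, ← mul_smul, creation, ι_mul_ι, hs, add_smul, mul_smul, map_smul,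
          smul_assoc, ι_c_smul]
        exact add_mem (creation_mem q _ ih)
          (W.smul_mem s (W.smul_mem a (Submodule.subset_span ⟨l, rfl⟩)))
  refine eq_top_iff.2 fun m _ => ?_
  obtain ⟨u, rfl⟩ := Submodule.Quotient.mk_surjective _ m
  rw [mk_eq_smul_vacuum]
  refine E.basis.smul_mem_of_ι_smul_mem (fun i => ?_) u
    (Submodule.subset_span ⟨[], vermaMonomial_nil E φ a⟩)
  rcases i with _ | ⟨p, hp⟩
  · rw [E.basis_none]
    exact fun m hm => (ι_c_smul E φ a m).symm ▸ W.smul_mem a hm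
  · rw [E.basis_some]
    by_cases hpos : p ∈ posIdxT d φ
    · exact x_pos_mem hpos
    · simpa [creation] using creation_mem ⟨dualIdx p, (dualIdx_mem_posIdxT_iff hp).2 hpos⟩

theorem toFock_vermaMonomial (l : List (posIdxT d φ)) :
    toFock E φ a (vermaMonomial E φ a l) = (l.map X).prod := by
  induction l with
  | nil => rw [vermaMonomial_nil, toFock_vacuum, List.map_nil, List.prod_nil]
  | cons p l ih =>
    rw [vermaMonomial_cons, creation, toFock_ι_smul,
      fockRepLin_x E φ a (isIdx_of_mem_posIdxT p.2).dualIdx, fockGen_dualIdx, ih, List.map_cons,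
      List.prod_cons, LinearMap.mulLeft_apply]

noncomputable def fromFock : Fock d φ →ₗ[ℂ] VermaModT E φ a :=
  (basisMonomials (posIdxT d φ) ℂ).constr ℂ fun μ =>
    vermaMonomial E φ a (Finsupp.toMultiset μ).toList

theorem fromFock_comp_toFock : fromFock E φ a ∘ₗ toFock E φ a = LinearMap.id := by
  refine LinearMap.ext_on_range (span_vermaMonomial E φ a) fun l => ?_
  rw [LinearMap.comp_apply, toFock_vermaMonomial, prod_map_X_eq_monomial,
    ← congrFun (coe_basisMonomials _ ℂ), fromFock, Module.Basis.constr_basis, LinearMap.id_apply]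
  refine vermaMonomial_perm E φ a (Multiset.coe_eq_coe.1 ?_)
  rw [Multiset.coe_toList, Multiset.toFinsupp_toMultiset]

theorem toFock_injective : Function.Injective (toFock E φ a) :=
  Function.LeftInverse.injective (g := fromFock E φ a) fun m =>
    LinearMap.congr_fun (fromFock_comp_toFock E φ a) m

theorem vacuum_ne_zero : vacuum E φ a ≠ 0 := fun h =>
  one_ne_zero ((toFock_vacuum E φ a).symm.trans (by rw [h, map_zero]))

theorem vacuum_mem_of_ne_zero (ha : a ≠ 0)
    {N : Submodule (UniversalEnvelopingAlgebra ℂ L) (VermaModT E φ a)} {m : VermaModT E φ a}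
    (hm : m ∈ N) (hm0 : m ≠ 0) : vacuum E φ a ∈ N := by
  set W := (N.restrictScalars ℂ).map (toFock E φ a)
  have hW (p : posIdxT d φ) : ∀ f ∈ W, pderiv p f ∈ W := by
    rintro _ ⟨n, hn, rfl⟩
    have hp0 : a * p.1.1 ≠ 0 := mul_ne_zero ha (Int.cast_ne_zero.2 p.2.1)
    refine ⟨(a * p.1.1)⁻¹ • ι ℂ (E.x p.1.1 p.1.2) • n, N.smul_of_tower_mem _ (N.smul_mem _ hn), ?_⟩
    rw [map_smul, toFock_ι_smul, fockRepLin_x E φ a (isIdx_of_mem_posIdxT p.2),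
      fockGen_of_mem a p.2, LinearMap.smul_apply, inv_smul_smul₀ hp0]
    rfl
  obtain ⟨n, hn, hn1⟩ := one_mem_of_pderiv_mem W hW ⟨m, hm, rfl⟩
    fun h => hm0 (toFock_injective E φ a (h.trans (map_zero _).symm))
  rwa [toFock_injective E φ a (hn1.trans (toFock_vacuum E φ a).symm)] at hn

theorem isSimpleModule_of_ne_zero (ha : a ≠ 0) :
    IsSimpleModule (UniversalEnvelopingAlgebra ℂ L) (VermaModT E φ a) := by
  have : Nontrivial (VermaModT E φ a) := ⟨⟨_, _, vacuum_ne_zero E φ a⟩⟩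
  refine (isSimpleModule_iff _ _).2 ⟨fun N => or_iff_not_imp_left.2 fun hN => ?_⟩
  obtain ⟨m, hm, hm0⟩ := N.ne_bot_iff.1 hN
  exact eq_top_of_vacuum_mem E φ a (vacuum_mem_of_ne_zero E φ a ha hm hm0)

theorem not_isSimpleModule_zero (hd : 1 ≤ d 1) :
    ¬IsSimpleModule (UniversalEnvelopingAlgebra ℂ L) (VermaModT E φ 0) := by
  intro hs
  obtain ⟨p, hp⟩ := posIdxT_nonempty (φ := φ) hd
  let W : Submodule ℂ (VermaModT E φ 0) := LinearMap.ker (lcoeff ℂ 0 ∘ₗ toFock E φ 0)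
  have hW : ∀ i, ∀ m ∈ W, ι ℂ (E.basis i) • m ∈ W := by
    rintro (_ | ⟨q, hq⟩) m -
    · rw [LinearMap.mem_ker, E.basis_none, ι_c_smul, zero_smul, map_zero]
    · rw [LinearMap.mem_ker, E.basis_some, LinearMap.comp_apply, toFock_ι_smul,
        fockRepLin_x E φ 0 hq]
      exact constantCoeff_fockGen_zero _ _
  let N : Submodule (UniversalEnvelopingAlgebra ℂ L) (VermaModT E φ 0) :=
    { W with smul_mem' := fun u _ hm => E.basis.smul_mem_of_ι_smul_mem hW u hm }
  have hX : toFock E φ 0 (vermaMonomial E φ 0 [⟨p, hp⟩]) = X ⟨p, hp⟩ := by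
    rw [toFock_vermaMonomial, List.map_singleton, List.prod_singleton]
  rcases hs.eq_bot_or_eq_top N with h | h
  · have : vermaMonomial E φ 0 [⟨p, hp⟩] ∈ N := by simp [N, W, hX]
    rw [h, Submodule.mem_bot] at this
    exact X_ne_zero _ (hX.symm.trans (by rw [this, map_zero]))
  · have : vacuum E φ 0 ∈ N := h ▸ Submodule.mem_top
    simp [N, W, toFock_vacuum] at this

end HeisenbergL

theorem stmt_15 (d : ℕ → ℕ) (hd : ∀ k, 1 ≤ d k) (L : Type) [LieRing L] [LieAlgebra ℂ L]
    (E : HeisenbergL d L) (φ : ℕ → ℕ → Bool) (a : ℂ) :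
    IsSimpleModule (UniversalEnvelopingAlgebra ℂ L) (VermaModT E φ a) ↔ a ≠ 0 := by
  refine ⟨fun hs ha => ?_, E.isSimpleModule_of_ne_zero φ a⟩
  subst ha
  exact E.not_isSimpleModule_zero φ (hd 1) hs
end
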